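/- Let G be a countable group acting on a set X, let x ∈ X, let ν be a probability measure on G with ν({1}) > 0, and let ε > 0. For h ∈ G^n let O_h(x) denote the inverted orbit of x under h and set a_n = ν^{⊗n}({h ∈ G^n : |O_h(x)| ≤ εn}). Then the limit p_ε(x) = lim_{n→∞} a_n^{1/n} exists. -/

import Mathlib

open MeasureTheory Filter Topology

set_option linter.unusedSectionVars false

/-- The inverted orbit of a point `x` under a finite sequence `h = [h₁, …, hₙ]` of group
elements: `O_h(x) = {x, hₙ•x, (hₙhₙ₋₁)•x, …, (hₙhₙ₋₁⋯h₁)•x}`. -/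
def invOrbit {G X : Type*} [Group G] [MulAction G X] (h : List G) (x : X) : Set X :=
  insert x {y : X | ∃ k < h.length, y = (h.drop k).reverse.prod • x}

section Aux

variable {G X : Type*} [Group G] [MulAction G X]

lemma invOrbit_finite (h : List G) (x : X) : (invOrbit h x).Finite := by
  have hsub : invOrbit h x ⊆
      insert x ((fun k : ℕ => (h.drop k).reverse.prod • x) '' Set.Iio h.length) := by
    rintro y (rfl | ⟨k, hk, rfl⟩)
    · exact Set.mem_insert _ _
    · exact Set.mem_insert_of_mem _ ⟨k, hk, rfl⟩
  exact (((Set.finite_Iio _).image _).insert _).subset hsub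

lemma mem_invOrbit_self (h : List G) (x : X) : x ∈ invOrbit h x := Set.mem_insert _ _

lemma one_le_ncard_invOrbit (h : List G) (x : X) : 1 ≤ (invOrbit h x).ncard := by
  have := (Set.ncard_pos (invOrbit_finite h x)).2 ⟨x, mem_invOrbit_self h x⟩
  omega

lemma prod_smul_mem_invOrbit (l : List G) (x : X) : l.reverse.prod • x ∈ invOrbit l x := by
  rcases l with _ | ⟨a, t⟩
  · simpa using mem_invOrbit_self [] x
  · exact Set.mem_insert_of_mem _ ⟨0, by simp, by simp⟩

lemma invOrbit_append (l l' : List G) (x : X) :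
    invOrbit (l ++ l') x ⊆ invOrbit l' x ∪ (fun y => l'.reverse.prod • y) '' invOrbit l x := by
  rintro y (rfl | ⟨k, hk, rfl⟩)
  · exact Or.inl (mem_invOrbit_self l' _)
  · rw [List.length_append] at hk
    by_cases hkm : k < l.length
    · right
      refine ⟨(l.drop k).reverse.prod • x, ?_, ?_⟩
      · exact Set.mem_insert_of_mem _ ⟨k, hkm, rfl⟩
      · rw [List.drop_append_of_le_length hkm.le, List.reverse_append, List.prod_append,
          mul_smul]
    · left
      push_neg at hkm
      obtain ⟨j, rfl⟩ := Nat.exists_eq_add_of_le hkm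
      have hdrop : (l ++ l').drop (l.length + j) = l'.drop j := by
        simp [List.drop_append]
      rw [hdrop]
      have hj : j < l'.length := by omega
      exact Set.mem_insert_of_mem _ ⟨j, hj, rfl⟩

lemma ncard_invOrbit_append_le (l l' : List G) (x : X) :
    (invOrbit (l ++ l') x).ncard ≤ (invOrbit l x).ncard + (invOrbit l' x).ncard := by
  have hfin' := invOrbit_finite l' x
  have hfin := invOrbit_finite l x
  calc (invOrbit (l ++ l') x).ncard
      ≤ (invOrbit l' x ∪ (fun y => l'.reverse.prod • y) '' invOrbit l x).ncard :=
        Set.ncard_le_ncard (invOrbit_append l l' x) (hfin'.union (hfin.image _))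
    _ ≤ (invOrbit l' x).ncard + ((fun y => l'.reverse.prod • y) '' invOrbit l x).ncard :=
        Set.ncard_union_le _ _
    _ ≤ (invOrbit l' x).ncard + (invOrbit l x).ncard :=
        Nat.add_le_add_left (Set.ncard_image_le hfin) _
    _ = (invOrbit l x).ncard + (invOrbit l' x).ncard := by ring

lemma invOrbit_replicate_one (n : ℕ) (x : X) :
    invOrbit (List.replicate n (1 : G)) x = {x} := by
  ext y
  constructor
  · rintro (rfl | ⟨k, hk, rfl⟩)
    · rfl
    · simp [List.drop_replicate, List.reverse_replicate]
  · rintro rfl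
    exact mem_invOrbit_self _ _

lemma invOrbit_replicate_append (m : ℕ) (l' : List G) (x : X) :
    invOrbit (List.replicate m (1 : G) ++ l') x ⊆ invOrbit l' x := by
  intro y hy
  rcases invOrbit_append (List.replicate m (1:G)) l' x hy with h | ⟨z, hz, rfl⟩
  · exact h
  · rw [invOrbit_replicate_one] at hz
    rcases hz with rfl
    exact prod_smul_mem_invOrbit l' _

lemma invOrbit_append_replicate (n : ℕ) (l : List G) (x : X) :
    invOrbit (l ++ List.replicate n (1 : G)) x ⊆ invOrbit l x := by
  intro y hy
  rcases invOrbit_append l (List.replicate n (1:G)) x hy with h | ⟨z, hz, rfl⟩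
  · rw [invOrbit_replicate_one] at h
    rcases h with rfl
    exact mem_invOrbit_self l _
  · simpa [List.reverse_replicate] using hz

end Aux

section Meas

variable {G : Type*} [Group G] [Countable G] [MeasurableSpace G] [MeasurableSingletonClass G]

lemma measSet {k : ℕ} (S : Set (Fin k → G)) : MeasurableSet S :=
  S.to_countable.measurableSet

lemma mp_append (ν : Measure G) [IsProbabilityMeasure ν] (m n : ℕ) :
    MeasurePreserving (fun p : (Fin m → G) × (Fin n → G) => Fin.append p.1 p.2)
      ((Measure.pi fun _ : Fin m => ν).prod (Measure.pi fun _ : Fin n => ν))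
      (Measure.pi fun _ : Fin (m + n) => ν) := by
  have key : (fun p : (Fin m → G) × (Fin n → G) => Fin.append p.1 p.2) =
      (MeasurableEquiv.piCongrLeft (fun _ : Fin (m+n) => G) finSumFinEquiv) ∘
        (MeasurableEquiv.sumPiEquivProdPi (fun _ : Fin m ⊕ Fin n => G)).symm := by
    funext p
    simp only [Function.comp_apply]
    funext i
    simp only [MeasurableEquiv.piCongrLeft, MeasurableEquiv.sumPiEquivProdPi,
      Equiv.piCongrLeft, Equiv.piCongrLeft', Equiv.sumPiEquivProdPi, MeasurableEquiv.coe_mk,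
      Equiv.coe_fn_mk, Equiv.coe_fn_symm_mk, MeasurableEquiv.symm_mk, eq_rec_constant]
    refine Fin.addCases (fun j => ?_) (fun j => ?_) i <;>
      simp [finSumFinEquiv_symm_apply_castAdd, finSumFinEquiv_symm_apply_natAdd]
  rw [key]
  exact (measurePreserving_piCongrLeft (fun _ : Fin (m+n) => ν) finSumFinEquiv).comp
    (measurePreserving_sumPiEquivProdPi_symm (fun _ : Fin m ⊕ Fin n => ν))

lemma append_inj (m n : ℕ) :
    Function.Injective (fun p : (Fin m → G) × (Fin n → G) => Fin.append p.1 p.2) := by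
  rintro ⟨a, b⟩ ⟨c, d⟩ h
  simp only at h
  have h1 : a = c := by
    funext j; have := congrFun h (Fin.castAdd n j); simpa using this
  have h2 : b = d := by
    funext j; have := congrFun h (Fin.natAdd m j); simpa using this
  simp [h1, h2]

lemma meas_append_image (ν : Measure G) [IsProbabilityMeasure ν] (m n : ℕ)
    (T : Set (Fin m → G)) (T' : Set (Fin n → G)) :
    (Measure.pi fun _ : Fin (m + n) => ν)
        ((fun p : (Fin m → G) × (Fin n → G) => Fin.append p.1 p.2) '' (T ×ˢ T')) =
      (Measure.pi fun _ : Fin m => ν) T * (Measure.pi fun _ : Fin n => ν) T' := by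
  have hmp := mp_append ν m n (G := G)
  have hpre : (fun p : (Fin m → G) × (Fin n → G) => Fin.append p.1 p.2) ⁻¹'
      ((fun p : (Fin m → G) × (Fin n → G) => Fin.append p.1 p.2) '' (T ×ˢ T')) = T ×ˢ T' :=
    Set.preimage_image_eq _ (append_inj m n)
  have hms : MeasurableSet ((fun p : (Fin m → G) × (Fin n → G) => Fin.append p.1 p.2) ''
      (T ×ˢ T')) := measSet _
  have heq := hmp.measure_preimage hms.nullMeasurableSet
  rw [hpre] at heq
  rw [← heq, Measure.prod_prod]

lemma pi_singleton_one (ν : Measure G) [IsProbabilityMeasure ν] (k : ℕ) :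
    (Measure.pi fun _ : Fin k => ν) {fun _ => (1 : G)} = ν {1} ^ k := by
  have : ({fun _ => (1 : G)} : Set (Fin k → G)) = Set.pi Set.univ (fun _ => ({1} : Set G)) := by
    ext f
    simp [funext_iff, Set.mem_pi]
  rw [this, Measure.pi_pi]
  simp

end Meas

theorem stmt10 {G X : Type*} [Group G] [Countable G] [MeasurableSpace G]
    [MeasurableSingletonClass G] [MulAction G X] (x : X)
    (ν : Measure G) [IsProbabilityMeasure ν] (hlazy : 0 < ν {1})
    (ε : ℝ) (hε : 0 < ε) :
    ∃ p : ℝ, Tendsto (fun n : ℕ =>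
        ((Measure.pi fun _ : Fin n => ν)
            {h : Fin n → G | ((invOrbit (List.ofFn h) x).ncard : ℝ) ≤ ε * n}).toReal
          ^ (1 / (n : ℝ)))
      atTop (𝓝 p) := by
  classical
  set S : ∀ n : ℕ, Set (Fin n → G) :=
    fun n => {h : Fin n → G | ((invOrbit (List.ofFn h) x).ncard : ℝ) ≤ ε * n} with hS
  set μ : ∀ n : ℕ, Measure (Fin n → G) := fun n => Measure.pi fun _ : Fin n => ν with hμ
  set A : ℕ → ℝ := fun n => (μ n (S n)).toReal with hA
  set c : ℝ := (ν {1}).toReal with hc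
  have hν1 : ν {1} ≠ ⊤ := (measure_lt_top ν _).ne
  have hcpos : 0 < c := ENNReal.toReal_pos hlazy.ne' hν1
  have hcle1 : c ≤ 1 := by
    rw [hc]
    exact ENNReal.toReal_le_of_le_ofReal zero_le_one (by simpa using prob_le_one)
  have hAle1 : ∀ n, A n ≤ 1 := fun n => by
    simpa using ENNReal.toReal_le_of_le_ofReal zero_le_one (by simpa using prob_le_one)
  have hAnonneg : ∀ n, 0 ≤ A n := fun n => ENNReal.toReal_nonneg
  have hμfin : ∀ n (T : Set (Fin n → G)), μ n T ≠ ⊤ := fun n T => (measure_lt_top _ _).ne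
  have key : ∀ (m n : ℕ) (T : Set (Fin m → G)) (T' : Set (Fin n → G)),
      (∀ h ∈ T, ∀ h' ∈ T', Fin.append h h' ∈ S (m + n)) →
      (μ m T).toReal * (μ n T').toReal ≤ A (m + n) := by
    intro m n T T' hsub
    have himg : (fun p : (Fin m → G) × (Fin n → G) => Fin.append p.1 p.2) '' (T ×ˢ T')
        ⊆ S (m + n) := by
      rintro _ ⟨⟨h, h'⟩, ⟨hh, hh'⟩, rfl⟩
      exact hsub h hh h' hh'
    have h1 : μ m T * μ n T' ≤ μ (m + n) (S (m + n)) := by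
      rw [← meas_append_image ν m n T T']
      exact measure_mono himg
    have h2 := ENNReal.toReal_mono (hμfin _ _) h1
    rwa [ENNReal.toReal_mul] at h2
  have superm : ∀ m n, A m * A n ≤ A (m + n) := by
    intro m n
    refine key m n (S m) (S n) ?_
    intro h hh h' hh'
    simp only [hS, Set.mem_setOf_eq] at hh hh' ⊢
    rw [List.ofFn_fin_append]
    have hle := ncard_invOrbit_append_le (List.ofFn h) (List.ofFn h') x
    push_cast
    calc ((invOrbit (List.ofFn h ++ List.ofFn h') x).ncard : ℝ)
        ≤ ((invOrbit (List.ofFn h) x).ncard : ℝ) + ((invOrbit (List.ofFn h') x).ncard : ℝ) := by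
          exact_mod_cast hle
      _ ≤ ε * m + ε * n := add_le_add hh hh'
      _ = ε * ((m : ℝ) + n) := by ring
  have prefixset : ∀ m n, c ^ m * A n ≤ A (m + n) := by
    intro m n
    have hk := key m n {fun _ => (1 : G)} (S n) ?_
    · rwa [pi_singleton_one, ENNReal.toReal_pow] at hk
    · intro h hh h' hh'
      rcases hh with rfl
      simp only [hS, Set.mem_setOf_eq] at hh' ⊢
      rw [List.ofFn_fin_append, List.ofFn_const]
      have hle : (invOrbit (List.replicate m (1:G) ++ List.ofFn h') x).ncard
          ≤ (invOrbit (List.ofFn h') x).ncard :=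
        Set.ncard_le_ncard (invOrbit_replicate_append m (List.ofFn h') x) (invOrbit_finite _ _)
      push_cast
      calc ((invOrbit (List.replicate m (1:G) ++ List.ofFn h') x).ncard : ℝ)
          ≤ ((invOrbit (List.ofFn h') x).ncard : ℝ) := by exact_mod_cast hle
        _ ≤ ε * n := hh'
        _ ≤ ε * ((m:ℝ) + n) := by nlinarith [mul_nonneg hε.le (Nat.cast_nonneg (α := ℝ) m)]
  have suffixset : ∀ m n, A m * c ^ n ≤ A (m + n) := by
    intro m n
    have hk := key m n (S m) {fun _ => (1 : G)} ?_
    · rwa [pi_singleton_one, ENNReal.toReal_pow] at hk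
    · intro h hh h' hh'
      rcases hh' with rfl
      simp only [hS, Set.mem_setOf_eq] at hh ⊢
      rw [List.ofFn_fin_append, List.ofFn_const]
      have hle : (invOrbit (List.ofFn h ++ List.replicate n (1:G)) x).ncard
          ≤ (invOrbit (List.ofFn h) x).ncard :=
        Set.ncard_le_ncard (invOrbit_append_replicate n (List.ofFn h) x) (invOrbit_finite _ _)
      push_cast
      calc ((invOrbit (List.ofFn h ++ List.replicate n (1:G)) x).ncard : ℝ)
          ≤ ((invOrbit (List.ofFn h) x).ncard : ℝ) := by exact_mod_cast hle
        _ ≤ ε * m := hh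
        _ ≤ ε * ((m:ℝ) + n) := by nlinarith [mul_nonneg hε.le (Nat.cast_nonneg (α := ℝ) n)]
  have allone : ∀ n : ℕ, 1 ≤ ε * n → c ^ n ≤ A n := by
    intro n hn
    have h0 : ({fun _ => (1:G)} : Set (Fin n → G)) ⊆ S n := by
      rintro _ rfl
      simp only [hS, Set.mem_setOf_eq]
      rw [List.ofFn_const, invOrbit_replicate_one]
      simpa using hn
    have h1 : μ n {fun _ => (1:G)} ≤ μ n (S n) := measure_mono h0
    have h2 := ENNReal.toReal_mono (hμfin _ _) h1
    rwa [pi_singleton_one, ENNReal.toReal_pow] at h2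
  obtain ⟨N, hN⟩ : ∃ N : ℕ, 1 ≤ ε * N := by
    obtain ⟨N, hN⟩ := exists_nat_gt (1 / ε)
    exact ⟨N, by rw [div_lt_iff₀ hε] at hN; linarith⟩
  have hNmono : ∀ n, N ≤ n → 1 ≤ ε * n := by
    intro n hn
    calc (1:ℝ) ≤ ε * N := hN
      _ ≤ ε * n := by
        have h3 : (N:ℝ) ≤ n := by exact_mod_cast hn
        nlinarith
  set B : ℕ → ℝ := fun n => if n < N then c ^ n else A n with hB
  have hBpos : ∀ n, 0 < B n := by
    intro n
    simp only [hB]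
    split
    · positivity
    · next hn =>
      push_neg at hn
      exact lt_of_lt_of_le (by positivity) (allone n (hNmono n hn))
  have hBle1 : ∀ n, B n ≤ 1 := by
    intro n
    simp only [hB]
    split
    · exact pow_le_one₀ hcpos.le hcle1
    · exact hAle1 n
  have hBA : ∀ n, N ≤ n → B n = A n := by
    intro n hn
    simp only [hB]
    simp [Nat.not_lt.2 hn]
  have hBsuper : ∀ m n, B m * B n ≤ B (m + n) := by
    intro m n
    by_cases hmn : m + n < N
    · have hm : m < N := by omega
      have hn : n < N := by omega
      simp only [hB, if_pos hm, if_pos hn, if_pos hmn, ← pow_add]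
      exact le_rfl
    · push_neg at hmn
      rw [hBA _ hmn]
      by_cases hm : m < N
      · by_cases hn : n < N
        · simp only [hB, if_pos hm, if_pos hn]
          rw [← pow_add]
          exact allone _ (hNmono _ hmn)
        · push_neg at hn
          simp only [hB, if_pos hm, if_neg (Nat.not_lt.2 hn)]
          exact prefixset m n
      · push_neg at hm
        by_cases hn : n < N
        · simp only [hB, if_neg (Nat.not_lt.2 hm), if_pos hn]
          exact suffixset m n
        · push_neg at hn
          simp only [hB, if_neg (Nat.not_lt.2 hm), if_neg (Nat.not_lt.2 hn)]
          exact superm m n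
  set u : ℕ → ℝ := fun n => -Real.log (B n) with hu
  have husub : Subadditive u := by
    intro m n
    have h1 : Real.log (B m) + Real.log (B n) ≤ Real.log (B (m + n)) := by
      rw [← Real.log_mul (hBpos m).ne' (hBpos n).ne']
      exact Real.log_le_log (mul_pos (hBpos m) (hBpos n)) (hBsuper m n)
    simp only [hu]
    linarith
  have hunonneg : ∀ n, 0 ≤ u n := by
    intro n
    simp only [hu, neg_nonneg]
    exact Real.log_nonpos (hBpos n).le (hBle1 n)
  have hbdd : BddBelow (Set.range fun n : ℕ => u n / n) := by
    refine ⟨0, ?_⟩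
    rintro _ ⟨n, rfl⟩
    exact div_nonneg (hunonneg n) (Nat.cast_nonneg n)
  have hlim := husub.tendsto_lim hbdd
  refine ⟨Real.exp (-husub.lim), ?_⟩
  have hexp : Tendsto (fun n : ℕ => Real.exp (-(u n / n))) atTop (𝓝 (Real.exp (-husub.lim))) :=
    (Real.continuous_exp.tendsto _).comp (hlim.neg)
  refine hexp.congr' ?_
  filter_upwards [eventually_ge_atTop (max N 1)] with n hn
  have hnN : N ≤ n := le_trans (le_max_left _ _) hn
  have hn1 : 1 ≤ n := le_trans (le_max_right _ _) hn
  have hnne : (n:ℝ) ≠ 0 := Nat.cast_ne_zero.2 (by omega)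
  have hAB : A n = B n := (hBA n hnN).symm
  show Real.exp (-(u n / n)) = A n ^ (1 / (n:ℝ))
  rw [hAB, Real.rpow_def_of_pos (hBpos n)]
  congr 1
  simp only [hu]
  rw [neg_div, neg_neg, mul_one_div]
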